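/- arXiv:1911.02675 — 3 statements merged into one kernel-verified Lean document; each statement's English description precedes it below -/
import Mathlib

section
/- Let (Δ_t) be a sequence of random vectors in ℝ^d with Δ_{t+1} = (I - μ_t C_t^{-1}) Δ_t, where C_t are i.i.d. random symmetric positive definite matrices satisfying E[C_t^{-1}] = θ_1 I and E[C_t^{-2}] = θ_2 I, C_t independent of Δ_t, and μ_t deterministic step sizes. Then E[‖Δ_t‖²] = (∏_{j=0}^{t-1} ((θ_1/√θ_2 − μ_j √θ_2)² + 1 − θ_1²/θ_2)) · E[‖Δ_0‖²]. -/
open Matrix MeasureTheory ProbabilityTheory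

/-- Borel measurable structure on matrices (entrywise, as a pi type). -/
instance matrixMeasurableSpace {m n α : Type*} [MeasurableSpace α] :
    MeasurableSpace (Matrix m n α) :=
  MeasurableSpace.pi (X := fun _ : m => n → α)

section aux

lemma aux_measurable_entry {d : ℕ} (i j : Fin d) :
    Measurable (fun m : Matrix (Fin d) (Fin d) ℝ => m i j) :=
  (measurable_pi_apply j).comp (measurable_pi_apply (X := fun _ : Fin d => Fin d → ℝ) i)

lemma aux_measurable_det {d : ℕ} : Measurable (fun m : Matrix (Fin d) (Fin d) ℝ => m.det) := by
  simp_rw [Matrix.det_apply']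
  exact Finset.measurable_sum _ fun σ _ =>
    (Finset.measurable_prod _ fun i _ => aux_measurable_entry (σ i) i).const_mul _

lemma aux_measurable_inv_entry {d : ℕ} (i j : Fin d) :
    Measurable (fun m : Matrix (Fin d) (Fin d) ℝ => m⁻¹ i j) := by
  simp_rw [Matrix.inv_def, Matrix.smul_apply, Matrix.adjugate_apply, smul_eq_mul,
    Ring.inverse_eq_inv']
  apply Measurable.mul
  · exact aux_measurable_det.inv
  · simp_rw [Matrix.det_apply']
    refine Finset.measurable_sum _ fun σ _ => Measurable.const_mul ?_ _
    refine Finset.measurable_prod _ fun k _ => ?_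
    simp_rw [Matrix.updateRow_apply]
    by_cases h : σ k = j <;> simp [h, aux_measurable_entry]

lemma aux_measurable_inv {d : ℕ} : Measurable (fun m : Matrix (Fin d) (Fin d) ℝ => m⁻¹) :=
  measurable_pi_lambda (X := fun _ : Fin d => Fin d → ℝ) _ fun i => measurable_pi_lambda _ fun j => aux_measurable_inv_entry i j

lemma aux_measurable_invsq {d : ℕ} :
    Measurable (fun m : Matrix (Fin d) (Fin d) ℝ => m⁻¹ * m⁻¹) := by
  refine measurable_pi_lambda (X := fun _ : Fin d => Fin d → ℝ) _ fun i => measurable_pi_lambda _ fun j => ?_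
  have : (fun m : Matrix (Fin d) (Fin d) ℝ => (m⁻¹ * m⁻¹) i j)
      = fun m => ∑ k, m⁻¹ i k * m⁻¹ k j := by
    funext m; simp [Matrix.mul_apply]
  rw [this]
  exact Finset.measurable_sum _ fun k _ =>
    (aux_measurable_inv_entry i k).mul (aux_measurable_inv_entry k j)

lemma aux_quad_eq {d : ℕ} (M : Matrix (Fin d) (Fin d) ℝ) (v : Fin d → ℝ) :
    v ⬝ᵥ M.mulVec v = ∑ i, ∑ j, M i j * (v i * v j) := by
  simp only [dotProduct, Matrix.mulVec, Finset.mul_sum]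
  exact Finset.sum_congr rfl fun i _ => Finset.sum_congr rfl fun j _ => by ring

lemma aux_expand {d : ℕ} (A : Matrix (Fin d) (Fin d) ℝ) (hA : Aᵀ = A) (v : Fin d → ℝ)
    (μ : ℝ) :
    (v - μ • A.mulVec v) ⬝ᵥ (v - μ • A.mulVec v)
      = v ⬝ᵥ v - 2 * μ * (v ⬝ᵥ A.mulVec v) + μ ^ 2 * (v ⬝ᵥ (A * A).mulVec v) := by
  have h2 : A.mulVec v ⬝ᵥ A.mulVec v = v ⬝ᵥ (A * A).mulVec v := by
    rw [Matrix.dotProduct_mulVec, ← Matrix.mulVec_transpose, hA, Matrix.mulVec_mulVec,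
      dotProduct_comm]
  simp only [sub_dotProduct, dotProduct_sub, smul_dotProduct,
    dotProduct_smul, smul_eq_mul, dotProduct_comm (A.mulVec v) v, h2]
  ring

lemma aux_key {Ω : Type*} [MeasurableSpace Ω] (P : Measure Ω) [IsProbabilityMeasure P]
    {d : ℕ} (M : Ω → Matrix (Fin d) (Fin d) ℝ) (V : Ω → Fin d → ℝ) (c : ℝ)
    (hVmeas : Measurable V)
    (hintM : ∀ i j, Integrable (fun ω => M ω i j) P)
    (hintV : Integrable (fun ω => V ω ⬝ᵥ V ω) P)
    (hmom : ∀ i j, ∫ ω, M ω i j ∂P = if i = j then c else 0)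
    (hind : IndepFun M V P) :
    Integrable (fun ω => V ω ⬝ᵥ (M ω).mulVec (V ω)) P ∧
      ∫ ω, V ω ⬝ᵥ (M ω).mulVec (V ω) ∂P = c * ∫ ω, V ω ⬝ᵥ V ω ∂P := by
  have hVi : ∀ i : Fin d, Measurable (fun ω => V ω i) :=
    fun i => (measurable_pi_apply i).comp hVmeas
  have hprod : ∀ i j : Fin d, Integrable (fun ω => V ω i * V ω j) P := by
    intro i j
    refine Integrable.mono' hintV ((hVi i).mul (hVi j)).aestronglyMeasurable ?_
    filter_upwards with ω
    have h1 : V ω i * V ω i ≤ V ω ⬝ᵥ V ω := by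
      simpa [dotProduct] using
        Finset.single_le_sum (f := fun k => V ω k * V ω k)
          (fun k _ => mul_self_nonneg _) (Finset.mem_univ i)
    have h2 : V ω j * V ω j ≤ V ω ⬝ᵥ V ω := by
      simpa [dotProduct] using
        Finset.single_le_sum (f := fun k => V ω k * V ω k)
          (fun k _ => mul_self_nonneg _) (Finset.mem_univ j)
    have habs : |V ω i * V ω j| ≤ (V ω i * V ω i + V ω j * V ω j) / 2 := by
      rw [abs_mul]
      nlinarith [sq_nonneg (|V ω i| - |V ω j|), sq_abs (V ω i), sq_abs (V ω j),
        abs_nonneg (V ω i), abs_nonneg (V ω j)]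
    have : ‖V ω i * V ω j‖ = |V ω i * V ω j| := rfl
    rw [this]
    linarith
  have hindc : ∀ i j : Fin d,
      IndepFun (fun ω => M ω i j) (fun ω => V ω i * V ω j) P := by
    intro i j
    exact hind.comp (aux_measurable_entry i j)
      ((measurable_pi_apply i).mul (measurable_pi_apply j))
  have hintterm : ∀ i j : Fin d, Integrable (fun ω => M ω i j * (V ω i * V ω j)) P := by
    intro i j
    exact (hindc i j).integrable_mul (hintM i j) (hprod i j)
  have heq : (fun ω => V ω ⬝ᵥ (M ω).mulVec (V ω)) =
      fun ω => ∑ i, ∑ j, M ω i j * (V ω i * V ω j) := by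
    funext ω; exact aux_quad_eq _ _
  constructor
  · rw [heq]
    exact integrable_finset_sum _ fun i _ => integrable_finset_sum _ fun j _ => hintterm i j
  · rw [heq]
    rw [integral_finset_sum _ fun i _ => integrable_finset_sum _ fun j _ => hintterm i j]
    have : ∀ i : Fin d, ∫ ω, ∑ j, M ω i j * (V ω i * V ω j) ∂P
        = c * ∫ ω, V ω i * V ω i ∂P := by
      intro i
      rw [integral_finset_sum _ fun j _ => hintterm i j]
      have : ∀ j : Fin d, ∫ ω, M ω i j * (V ω i * V ω j) ∂P
          = (if i = j then c else 0) * ∫ ω, V ω i * V ω j ∂P := by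
        intro j
        have := (hindc i j).integral_fun_mul_eq_mul_integral (hintM i j).aestronglyMeasurable
          (hprod i j).aestronglyMeasurable
        rw [hmom] at this
        exact this
      simp_rw [this]
      simp
    simp_rw [this]
    rw [← Finset.mul_sum, ← integral_finset_sum _ fun i _ => hprod i i]
    simp [dotProduct]

end aux

/-- Exact expected error of the IHS with refreshed (i.i.d.) embeddings satisfying
the unbiased inverse moment condition: with `Δ_{t+1} = (I - μ_t C_t⁻¹) Δ_t`,
`E[‖Δ_t‖²] = ∏_{j<t} ((θ₁/√θ₂ - μ_j √θ₂)² + 1 - θ₁²/θ₂) · E[‖Δ₀‖²]`. -/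
theorem stmt2 {Ω : Type*} [MeasurableSpace Ω] (P : Measure Ω) [IsProbabilityMeasure P]
    (d : ℕ) (Cs : ℕ → Ω → Matrix (Fin d) (Fin d) ℝ)
    (θ1 θ2 : ℝ) (hθ1 : 0 < θ1) (hθ2 : 0 < θ2) (hCS : θ1 ^ 2 ≤ θ2)
    (hPD : ∀ t ω, (Cs t ω).PosDef)
    (hmeas : ∀ t, Measurable (Cs t))
    -- i.i.d.: mutually independent with identical moments
    (hindepC : iIndepFun Cs P)
    (hint1 : ∀ t i j, Integrable (fun ω => (Cs t ω)⁻¹ i j) P)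
    (hint2 : ∀ t i j, Integrable (fun ω => ((Cs t ω)⁻¹ * (Cs t ω)⁻¹) i j) P)
    (hmom1 : ∀ t i j, ∫ ω, (Cs t ω)⁻¹ i j ∂P = if i = j then θ1 else 0)
    (hmom2 : ∀ t i j, ∫ ω, ((Cs t ω)⁻¹ * (Cs t ω)⁻¹) i j ∂P = if i = j then θ2 else 0)
    (μs : ℕ → ℝ) (Δ : ℕ → Ω → Fin d → ℝ)
    (hmeasΔ : ∀ t, Measurable (Δ t))
    (hintΔ : ∀ t, Integrable (fun ω => Δ t ω ⬝ᵥ Δ t ω) P)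
    -- `C_t` is independent of `Δ_t`
    (hindep : ∀ t, IndepFun (Cs t) (Δ t) P)
    (hrec : ∀ t ω, Δ (t + 1) ω = Δ t ω - μs t • ((Cs t ω)⁻¹).mulVec (Δ t ω)) :
    ∀ t, ∫ ω, Δ t ω ⬝ᵥ Δ t ω ∂P
      = (∏ j ∈ Finset.range t,
          ((θ1 / Real.sqrt θ2 - μs j * Real.sqrt θ2) ^ 2 + 1 - θ1 ^ 2 / θ2))
        * ∫ ω, Δ 0 ω ⬝ᵥ Δ 0 ω ∂P := by
  intro t
  induction t with
  | zero => simp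
  | succ t ih =>
    have hA : ∀ ω, ((Cs t ω)⁻¹)ᵀ = (Cs t ω)⁻¹ := by
      intro ω
      have h := ((hPD t ω).inv).isHermitian
      rwa [Matrix.IsHermitian, Matrix.conjTranspose_eq_transpose_of_trivial] at h
    have key1 := aux_key P (fun ω => (Cs t ω)⁻¹) (Δ t) θ1 (hmeasΔ t) (hint1 t) (hintΔ t)
      (hmom1 t) ((hindep t).comp aux_measurable_inv measurable_id)
    have key2 := aux_key P (fun ω => (Cs t ω)⁻¹ * (Cs t ω)⁻¹) (Δ t) θ2 (hmeasΔ t)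
      (hint2 t) (hintΔ t) (hmom2 t) ((hindep t).comp aux_measurable_invsq measurable_id)
    beta_reduce at key1 key2
    have hstep : ∫ ω, Δ (t + 1) ω ⬝ᵥ Δ (t + 1) ω ∂P
        = (1 - 2 * μs t * θ1 + μs t ^ 2 * θ2) * ∫ ω, Δ t ω ⬝ᵥ Δ t ω ∂P := by
      have hfun : (fun ω => Δ (t + 1) ω ⬝ᵥ Δ (t + 1) ω)
          = fun ω => Δ t ω ⬝ᵥ Δ t ω
              - 2 * μs t * (Δ t ω ⬝ᵥ ((Cs t ω)⁻¹).mulVec (Δ t ω))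
              + μs t ^ 2 * (Δ t ω ⬝ᵥ ((Cs t ω)⁻¹ * (Cs t ω)⁻¹).mulVec (Δ t ω)) := by
        funext ω
        rw [hrec t ω]
        exact aux_expand _ (hA ω) _ _
      have e1 : ∫ ω, (Δ t ω ⬝ᵥ Δ t ω
              - 2 * μs t * (Δ t ω ⬝ᵥ ((Cs t ω)⁻¹).mulVec (Δ t ω)))
              + μs t ^ 2 * (Δ t ω ⬝ᵥ ((Cs t ω)⁻¹ * (Cs t ω)⁻¹).mulVec (Δ t ω)) ∂P
          = (∫ ω, Δ t ω ⬝ᵥ Δ t ω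
              - 2 * μs t * (Δ t ω ⬝ᵥ ((Cs t ω)⁻¹).mulVec (Δ t ω)) ∂P)
            + ∫ ω, μs t ^ 2 * (Δ t ω ⬝ᵥ ((Cs t ω)⁻¹ * (Cs t ω)⁻¹).mulVec (Δ t ω)) ∂P :=
        integral_add ((hintΔ t).sub (key1.1.const_mul _)) (key2.1.const_mul _)
      have e2 : ∫ ω, Δ t ω ⬝ᵥ Δ t ω
              - 2 * μs t * (Δ t ω ⬝ᵥ ((Cs t ω)⁻¹).mulVec (Δ t ω)) ∂P
          = (∫ ω, Δ t ω ⬝ᵥ Δ t ω ∂P)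
            - ∫ ω, 2 * μs t * (Δ t ω ⬝ᵥ ((Cs t ω)⁻¹).mulVec (Δ t ω)) ∂P :=
        integral_sub (hintΔ t) (key1.1.const_mul _)
      rw [hfun, e1, e2, integral_const_mul, integral_const_mul, key1.2, key2.2]
      ring
    have hs : Real.sqrt θ2 ^ 2 = θ2 := Real.sq_sqrt hθ2.le
    have hs0 : Real.sqrt θ2 ≠ 0 := by positivity
    have hfac : (θ1 / Real.sqrt θ2 - μs t * Real.sqrt θ2) ^ 2 + 1 - θ1 ^ 2 / θ2
        = 1 - 2 * μs t * θ1 + μs t ^ 2 * θ2 := by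
      rw [← hs]
      field_simp
      ring_nf
      rw [Real.sqrt_sq (Real.sqrt_nonneg _)]
      ring
    rw [hstep, ih, Finset.prod_range_succ, hfac]
    ring
end

section
/- Let λ ∈ (0,1) and μ ∈ ℝ, and let C be a symmetric positive definite d×d matrix whose eigenvalues all lie in [(1-√ρ)², (1+√ρ)²] for some ρ ∈ (0,1). With μ = (1-ρ)²/(1+ρ), the operator norm of I_d − μ C^{-1} satisfies ‖I_d − μ C^{-1}‖ ≤ 2√ρ/(1+ρ). -/
open Matrix

/-- If the eigenvalues of the symmetric positive definite matrix `C` lie in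
`[(1-√ρ)², (1+√ρ)²]` for some `ρ ∈ (0,1)`, then with step size
`μ = (1-ρ)²/(1+ρ)` the operator norm of `I - μ C⁻¹` is at most `2√ρ/(1+ρ)`,
i.e. `‖(I - μC⁻¹)x‖² ≤ (2√ρ/(1+ρ))² ‖x‖²` for every vector `x`. -/
theorem stmt5 (d : ℕ) (ρ : ℝ) (hρ : ρ ∈ Set.Ioo (0 : ℝ) 1)
    (C : Matrix (Fin d) (Fin d) ℝ) (hPD : C.PosDef)
    (hspec : ∀ i, (1 - Real.sqrt ρ) ^ 2 ≤ hPD.1.eigenvalues i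
      ∧ hPD.1.eigenvalues i ≤ (1 + Real.sqrt ρ) ^ 2) :
    ∀ x : Fin d → ℝ,
      (x - ((1 - ρ) ^ 2 / (1 + ρ)) • (C⁻¹).mulVec x) ⬝ᵥ
        (x - ((1 - ρ) ^ 2 / (1 + ρ)) • (C⁻¹).mulVec x)
      ≤ (2 * Real.sqrt ρ / (1 + ρ)) ^ 2 * (x ⬝ᵥ x) := by
  intro x
  obtain ⟨hρ0, hρ1⟩ := hρ
  have hA := hPD.1
  set s : ℝ := Real.sqrt ρ with hs
  have hs0 : 0 < s := Real.sqrt_pos.mpr hρ0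
  have hs2 : s ^ 2 = ρ := Real.sq_sqrt hρ0.le
  have hs1 : s < 1 := by nlinarith
  set μ : ℝ := (1 - ρ) ^ 2 / (1 + ρ) with hμ
  set r : ℝ := 2 * s / (1 + ρ) with hr
  set U : Matrix (Fin d) (Fin d) ℝ := (hA.eigenvectorUnitary : Matrix (Fin d) (Fin d) ℝ) with hUdef
  have hU1 : star U * U = 1 := mem_unitaryGroup_iff'.mp hA.eigenvectorUnitary.2
  have hU2 : U * star U = 1 := mem_unitaryGroup_iff.mp hA.eigenvectorUnitary.2
  have hstar : star U = Uᵀ := conjTranspose_eq_transpose_of_trivial U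
  have hST : C = U * diagonal hA.eigenvalues * star U := by
    have := hA.spectral_theorem
    simpa using this
  have hev : ∀ i, 0 < hA.eigenvalues i := hPD.eigenvalues_pos
  set f : Fin d → ℝ := fun i => 1 - μ / hA.eigenvalues i with hf
  set Dinv : Matrix (Fin d) (Fin d) ℝ := diagonal (fun i => (hA.eigenvalues i)⁻¹) with hDinv
  have key : ∀ (V : Matrix (Fin d) (Fin d) ℝ), Vᵀ * V = 1 →
      ∀ v : Fin d → ℝ, (V *ᵥ v) ⬝ᵥ (V *ᵥ v) = v ⬝ᵥ v := by
    intro V h v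
    rw [dotProduct_mulVec, vecMul_mulVec, h, vecMul_one]
  have hkey : (U * Dinv * star U) * C = 1 := by
    have : (U * Dinv * star U) * (U * diagonal hA.eigenvalues * star U) = 1 := by
      calc (U * Dinv * star U) * (U * diagonal hA.eigenvalues * star U)
          = U * (Dinv * (star U * U) * diagonal hA.eigenvalues) * star U := by noncomm_ring
        _ = U * (Dinv * diagonal hA.eigenvalues) * star U := by rw [hU1]; noncomm_ring
        _ = 1 := by
            rw [hDinv, diagonal_mul_diagonal]
            have h1 : (fun i => (hA.eigenvalues i)⁻¹ * hA.eigenvalues i) = fun _ => (1:ℝ) := by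
              funext i; exact inv_mul_cancel₀ (hev i).ne'
            rw [h1, diagonal_one, mul_one, hU2]
    exact (congrArg (fun M => (U * Dinv * star U) * M) hST).trans this
  have hCinv : C⁻¹ = U * Dinv * star U := inv_eq_left_inv hkey
  have hdf : diagonal f = 1 - μ • Dinv := by
    rw [hDinv, ← diagonal_smul, ← diagonal_one, ← diagonal_sub]
    congr 1
  have hM : (1 : Matrix (Fin d) (Fin d) ℝ) - μ • C⁻¹ = U * diagonal f * star U := by
    rw [hCinv, hdf, Matrix.mul_sub, Matrix.sub_mul, mul_one, hU2, Matrix.mul_smul, Matrix.smul_mul]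
  have hvec : x - μ • (C⁻¹).mulVec x = U *ᵥ (diagonal f *ᵥ (star U *ᵥ x)) := by
    rw [mulVec_mulVec, mulVec_mulVec, ← hM, Matrix.sub_mulVec, Matrix.one_mulVec,
      Matrix.smul_mulVec]
  set y : Fin d → ℝ := star U *ᵥ x with hy
  have hyx : y ⬝ᵥ y = x ⬝ᵥ x := by
    rw [hy, hstar]
    exact key Uᵀ (by rw [transpose_transpose, ← hstar, hU2]) x
  rw [hvec, key U (by rw [← hstar, hU1]) _, ← hyx]
  have hfb : ∀ i, f i ^ 2 ≤ r ^ 2 := by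
    intro i
    obtain ⟨hlo, hhi⟩ := hspec i
    have hlam := hev i
    have h1ρ : (0:ℝ) < 1 + ρ := by linarith
    have hμpos : 0 < μ := by
      apply div_pos (by nlinarith) h1ρ
    have h1s : (0:ℝ) < (1 - s)^2 := pow_pos (by linarith) 2
    have h1s' : (0:ℝ) < (1 + s)^2 := by positivity
    have hlow : -r ≤ f i := by
      have hd : μ / hA.eigenvalues i ≤ μ / (1 - s)^2 :=
        div_le_div_of_nonneg_left hμpos.le h1s hlo
      have hend : 1 - μ / (1 - s)^2 = -r := by
        rw [hμ, hr, ← hs2]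
        have hne1 : (1 - s)^2 ≠ 0 := h1s.ne'
        have hne2 : (1 + s^2) ≠ 0 := by positivity
        field_simp
        ring_nf
        have hne3 : (1 - s * 2 + s ^ 2) ≠ 0 := (by nlinarith [h1s] : (0:ℝ) < 1 - s * 2 + s ^ 2).ne'
        field_simp
        ring
      simp only [hf]
      linarith [hd]
    have hhigh : f i ≤ r := by
      have hd : μ / (1 + s)^2 ≤ μ / hA.eigenvalues i :=
        div_le_div_of_nonneg_left hμpos.le hlam hhi
      have hend : 1 - μ / (1 + s)^2 = r := by
        rw [hμ, hr, ← hs2]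
        field_simp
        ring_nf
      simp only [hf]
      linarith [hd]
    nlinarith [hlow, hhigh, sq_nonneg (f i - r), sq_nonneg (f i + r)]
  have hdot : (diagonal f *ᵥ y) ⬝ᵥ (diagonal f *ᵥ y) = ∑ i, (f i * y i)^2 := by
    simp [dotProduct, mulVec_diagonal, sq, mul_assoc, mul_comm, mul_left_comm]
  rw [hdot]
  have hsum : r ^ 2 * (y ⬝ᵥ y) = ∑ i, r^2 * y i ^2 := by
    simp [dotProduct, Finset.mul_sum, sq, mul_assoc, mul_comm, mul_left_comm]
  rw [hsum]
  apply Finset.sum_le_sum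
  intro i _
  have := hfb i
  nlinarith [sq_nonneg (y i)]
end

section
/- Let a > 0 and let W(a) be the unique positive real solution of W e^W = a. Then exp(W(a)) ≤ (2a+1)/(1 + log(a+1)). -/
open Real

/-- cubic lower bound for exp on nonneg reals -/
lemma cubic_le_exp_aux (x : ℝ) (hx : 0 ≤ x) : 1 + x + x^2/2 + x^3/6 ≤ Real.exp x := by
  have h := Real.sum_le_exp_of_nonneg hx 4
  have : ∑ i ∈ Finset.range 4, x ^ i / (Nat.factorial i) = 1 + x + x^2/2 + x^3/6 := by
    norm_num [Finset.sum_range_succ, Nat.factorial]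
  linarith [this ▸ h]

/-- quadratic upper bound for exp(-x) on nonneg reals -/
lemma exp_neg_ub_aux (x : ℝ) (hx : 0 ≤ x) : Real.exp (-x) ≤ 1 - x + x^2/2 := by
  have h1 := cubic_le_exp_aux x hx
  have h2 : Real.exp (-x) * Real.exp x = 1 := by rw [← Real.exp_add]; simp
  have h3 := Real.exp_pos x
  have h4 := Real.exp_pos (-x)
  have hcpos : (0:ℝ) < 1 + x + x^2/2 + x^3/6 := by positivity
  nlinarith [mul_le_mul_of_nonneg_left h1 h4.le, hcpos, pow_nonneg hx 3, pow_nonneg hx 4,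
    pow_nonneg hx 5]

/-- cubic upper bound for exp on [0,1] -/
lemma exp_ub_aux (x : ℝ) (hx : 0 ≤ x) (hx1 : x ≤ 1) :
    Real.exp x ≤ 1 + x + x^2/2 + x^3/2 := by
  have h := Real.exp_bound' hx hx1 (n := 3) (by norm_num)
  have : ∑ m ∈ Finset.range 3, x ^ m / (Nat.factorial m) = 1 + x + x^2/2 := by
    norm_num [Finset.sum_range_succ, Nat.factorial]
  rw [this] at h
  norm_num [Nat.factorial] at h
  nlinarith [pow_nonneg hx 3]

/-- the key polynomial-exponential inequality -/
lemma p_nonneg_aux (x : ℝ) (hx : 0 ≤ x) :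
    0 ≤ x * Real.exp x - Real.exp x - Real.exp (-x) + 2 - x := by
  rcases le_or_gt x 1 with h1 | h1
  · have hub := exp_ub_aux x hx h1
    have hnb := exp_neg_ub_aux x hx
    nlinarith [mul_nonneg (sub_nonneg.2 h1) (sub_nonneg.2 hub), pow_nonneg hx 4]
  · have h2 : 1 ≤ Real.exp x := Real.one_le_exp (by linarith)
    have h3 : Real.exp (-x) ≤ 1 := Real.exp_le_one_iff.2 (by linarith)
    nlinarith [mul_nonneg (by linarith : (0:ℝ) ≤ x - 1) (by linarith : (0:ℝ) ≤ Real.exp x - 1)]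

lemma den_pos_aux (x : ℝ) : 0 < x * Real.exp x + 1 := by
  have h1 : 1 - x ≤ Real.exp (-x) := by linarith [Real.add_one_le_exp (-x)]
  have h2 := Real.exp_pos x
  have h3 : Real.exp (-x) * Real.exp x = 1 := by rw [← Real.exp_add]; simp
  nlinarith [mul_le_mul_of_nonneg_right h1 h2.le]

lemma key_aux (x : ℝ) (hx : 0 ≤ x) :
    1 + Real.log (x * Real.exp x + 1) ≤ 2 * x + Real.exp (-x) := by
  set f : ℝ → ℝ := fun t => 2*t - 1 + Real.exp (-t) - Real.log (t * Real.exp t + 1) with hf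
  have hderivAt : ∀ t : ℝ, HasDerivAt f
      (2 - Real.exp (-t) - (Real.exp t + t * Real.exp t) / (t * Real.exp t + 1)) t := by
    intro t
    have hden := den_pos_aux t
    have h1 : HasDerivAt (fun s : ℝ => Real.exp (-s)) (-Real.exp (-t)) t := by
      simpa [Function.comp_def] using (Real.hasDerivAt_exp (-t)).comp t (hasDerivAt_neg t)
    have h2 : HasDerivAt (fun s : ℝ => s * Real.exp s + 1)
        (Real.exp t + t * Real.exp t) t := by
      have := ((hasDerivAt_id t).mul (Real.hasDerivAt_exp t)).add_const 1
      simpa [mul_comm] using this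
    have h3 : HasDerivAt (fun s : ℝ => Real.log (s * Real.exp s + 1))
        ((Real.exp t + t * Real.exp t) / (t * Real.exp t + 1)) t := by
      have := (Real.hasDerivAt_log hden.ne').comp t h2
      simpa [div_eq_inv_mul, Function.comp_def] using this
    have h4 : HasDerivAt (fun s : ℝ => 2*s - 1) 2 t := by
      simpa using ((hasDerivAt_id t).const_mul 2).sub_const 1
    have := (h4.add h1).sub h3
    refine this.congr_deriv ?_
    try ring
  have hdiff : Differentiable ℝ f := fun t => (hderivAt t).differentiableAt
  have hmono : MonotoneOn f (Set.Ici 0) := by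
    apply monotoneOn_of_deriv_nonneg (convex_Ici 0) hdiff.continuous.continuousOn
      (hdiff.differentiableOn)
    intro t ht
    rw [(hderivAt t).deriv]
    have ht0 : 0 ≤ t := le_of_lt (by simpa using ht)
    have hden := den_pos_aux t
    rw [sub_nonneg, div_le_iff₀ hden]
    have hp := p_nonneg_aux t ht0
    have h3 : Real.exp (-t) * Real.exp t = 1 := by rw [← Real.exp_add]; simp
    nlinarith [h3]
  have h0 : f 0 = 0 := by simp [hf]
  have hfx : 0 ≤ f x := by
    have := hmono (Set.self_mem_Ici) (by exact hx) hx
    rw [h0] at this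
    exact this
  simp only [hf] at hfx
  linarith

/-- Hoorfar–Hassani bound for the Lambert `W` function: if `W > 0` solves
`W e^W = a` for `a > 0`, then `exp(W(a)) ≤ (2a+1)/(1 + log(a+1))`. -/
theorem stmt18 (a W : ℝ) (ha : 0 < a) (hW : 0 < W)
    (hLambert : W * Real.exp W = a) :
    Real.exp W ≤ (2 * a + 1) / (1 + Real.log (a + 1)) := by
  have hlog : 0 < Real.log (a + 1) := Real.log_pos (by linarith)
  rw [le_div_iff₀ (by linarith)]
  have hkey := key_aux W hW.le
  rw [hLambert] at hkey
  have hE := Real.exp_pos W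
  have h3 : Real.exp (-W) * Real.exp W = 1 := by rw [← Real.exp_add]; simp
  have := mul_le_mul_of_nonneg_right hkey hE.le
  nlinarith [this]
end
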